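/- arXiv:2412.18580 — 6 statements merged into one kernel-verified Lean document; each statement's English description precedes it below -/
import Mathlib

section
/- Let ℓ > 0, p_m > 0 and r > 1. Define V(k) for k ≥ 0 by: V(k) = ℓ√p_m (√r − 1/√r)·k if k < 1/r; V(k) = ℓ√p_m (2√k − k/√r − 1/√r) if 1/r ≤ k ≤ r; V(k) = ℓ√p_m (√r − 1/√r) if k > r. Then for every k ≥ 0, V(k) ≤ ℓ√p_m (√r − 1/√r)·(k − (k−1)⁺), where z⁺ = max(z,0). -/
/-- Value of a CLMM position with liquidity `ℓ`, center price `p_m` and relative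
width `r`, as a function of the normalized price `k = P / p_m`. -/
noncomputable def clmmNormValue (ℓ p_m r k : ℝ) : ℝ :=
  if k < 1 / r then ℓ * Real.sqrt p_m * (Real.sqrt r - 1 / Real.sqrt r) * k
  else if k ≤ r then
    ℓ * Real.sqrt p_m * (2 * Real.sqrt k - k / Real.sqrt r - 1 / Real.sqrt r)
  else ℓ * Real.sqrt p_m * (Real.sqrt r - 1 / Real.sqrt r)

/-- the CLMM position value is dominated by the covered-call payoff
`k ↦ ℓ√p_m (√r − 1/√r)·(k − (k−1)⁺)`. -/
theorem stmt2 (ℓ p_m r : ℝ) (hℓ : 0 < ℓ) (hpm : 0 < p_m) (hr : 1 < r) :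
    ∀ k : ℝ, 0 ≤ k →
      clmmNormValue ℓ p_m r k
        ≤ ℓ * Real.sqrt p_m * (Real.sqrt r - 1 / Real.sqrt r) * (k - max (k - 1) 0) := by
  intro k hk
  have hr0 : (0:ℝ) < r := lt_trans one_pos hr
  have hs0 : 0 < Real.sqrt r := Real.sqrt_pos.mpr hr0
  have hs2 : Real.sqrt r ^ 2 = r := Real.sq_sqrt hr0.le
  have hs : 1 < Real.sqrt r := by nlinarith
  have hc : 0 ≤ ℓ * Real.sqrt p_m := by positivity
  have hk2 : Real.sqrt k ^ 2 = k := Real.sq_sqrt hk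
  have hks : 0 ≤ Real.sqrt k := Real.sqrt_nonneg k
  unfold clmmNormValue
  split_ifs with h1 h2
  · -- k < 1/r
    have hk1 : k ≤ 1 := by
      have : 1 / r < 1 := by rw [div_lt_one hr0]; exact hr
      linarith
    rw [max_eq_right (by linarith : k - 1 ≤ (0:ℝ))]
    apply le_of_eq; ring
  · -- 1/r ≤ k ≤ r
    rcases le_or_gt k 1 with hk1 | hk1
    · rw [max_eq_right (by linarith : k - 1 ≤ (0:ℝ))]
      have key : 2 * Real.sqrt k - k / Real.sqrt r - 1 / Real.sqrt r
          ≤ (Real.sqrt r - 1 / Real.sqrt r) * (k - 0) := by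
        rw [← sub_nonneg]
        have h := sq_nonneg (Real.sqrt k * Real.sqrt r - 1)
        have hexp : (Real.sqrt r - 1 / Real.sqrt r) * (k - 0) -
            (2 * Real.sqrt k - k / Real.sqrt r - 1 / Real.sqrt r)
            = (Real.sqrt k * Real.sqrt r - 1)^2 / Real.sqrt r := by
          field_simp
          ring_nf
          nlinarith [hk2, hs2]
        rw [hexp]
        positivity
      calc ℓ * Real.sqrt p_m * (2 * Real.sqrt k - k / Real.sqrt r - 1 / Real.sqrt r)
          ≤ ℓ * Real.sqrt p_m * ((Real.sqrt r - 1 / Real.sqrt r) * (k - 0)) :=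
            mul_le_mul_of_nonneg_left key hc
        _ = ℓ * Real.sqrt p_m * (Real.sqrt r - 1 / Real.sqrt r) * (k - 0) := by ring
    · rw [max_eq_left (by linarith : (0:ℝ) ≤ k - 1)]
      have key : 2 * Real.sqrt k - k / Real.sqrt r - 1 / Real.sqrt r
          ≤ (Real.sqrt r - 1 / Real.sqrt r) * (k - (k - 1)) := by
        rw [← sub_nonneg]
        have h := sq_nonneg (Real.sqrt r - Real.sqrt k)
        have hexp : (Real.sqrt r - 1 / Real.sqrt r) * (k - (k - 1)) -
            (2 * Real.sqrt k - k / Real.sqrt r - 1 / Real.sqrt r)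
            = (Real.sqrt r - Real.sqrt k)^2 / Real.sqrt r := by
          field_simp
          ring_nf
          nlinarith [hk2, hs2]
        rw [hexp]
        positivity
      calc ℓ * Real.sqrt p_m * (2 * Real.sqrt k - k / Real.sqrt r - 1 / Real.sqrt r)
          ≤ ℓ * Real.sqrt p_m * ((Real.sqrt r - 1 / Real.sqrt r) * (k - (k - 1))) :=
            mul_le_mul_of_nonneg_left key hc
        _ = ℓ * Real.sqrt p_m * (Real.sqrt r - 1 / Real.sqrt r) * (k - (k - 1)) := by ring
  · -- k > r
    have hk1 : 1 < k := lt_trans hr (lt_of_not_ge h2)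
    rw [max_eq_left (by linarith : (0:ℝ) ≤ k - 1)]
    apply le_of_eq; ring
end

section
/- Let a < b be real numbers and let f : [0,∞) → ℝ be continuous with a ≤ f(0) ≤ b. Then there exists a unique pair (L, U) of continuous nondecreasing functions on [0,∞) with L(0) = U(0) = 0 such that: (i) Z(t) := f(t) + L(t) − U(t) ∈ [a, b] for all t ≥ 0; (ii) the Lebesgue–Stieltjes measure dL is carried by {t : Z(t) = a}, i.e. ∫_0^T 1_{Z(s) ≠ a} dL(s) = 0 for all T; and (iii) the Lebesgue–Stieltjes measure dU is carried by {t : Z(t) = b}, i.e. ∫_0^T 1_{Z(s) ≠ b} dU(s) = 0 for all T. -/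
/-!
Existence: alternate one-sided reflections. A phase pushes the path up at `a` by its running
regulator `sup (a - path)⁺` until the reflected path reaches `b`; the next phase pushes down at `b`
until `a` is reached, and so on. Each push only acts at its own barrier, so the glued pushes solve
the problem as long as the phase times exhaust `[0, ∞)`. They do: between the ends of two
consecutive complete phases `f` oscillates by `b - a`, which uniform continuity of `f` on a bounded
interval forbids infinitely often.

Uniqueness: for two solutions, `Z - Z'` cannot increase while it is positive, since then `Z ≠ a`
freezes `L` and `Z' ≠ b` freezes `U'`; by symmetry `Z = Z'`, and then `L - L' = U - U'` is locally
constant because at every time at least one of the barriers is not touched.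
-/

open MeasureTheory

/-- The Lebesgue–Stieltjes measure associated with a monotone continuous function. -/
noncomputable def lsMeasure (L : ℝ → ℝ) (hm : Monotone L) (hc : Continuous L) :
    Measure ℝ :=
  StieltjesFunction.measure ⟨L, hm, fun x => (hc.continuousAt).continuousWithinAt⟩

/-- A pair `(L, U)` solving the two-sided Skorokhod reflection problem on `[a, b]`
for the driving path `f`: both are continuous, nondecreasing, vanish at `0`,
the reflected path `Z = f + L − U` stays in `[a, b]` on `[0, ∞)`, and the
Lebesgue–Stieltjes measures `dL` and `dU` are carried by `{Z = a}` and `{Z = b}`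
respectively (i.e. `∫_0^T 1_{Z ≠ a} dL = 0` and `∫_0^T 1_{Z ≠ b} dU = 0` for all `T`). -/
def IsSkorokhodPair (a b : ℝ) (f L U : ℝ → ℝ) : Prop :=
  Continuous L ∧ Continuous U ∧ Monotone L ∧ Monotone U ∧ L 0 = 0 ∧ U 0 = 0 ∧
  (∀ t, 0 ≤ t → f t + L t - U t ∈ Set.Icc a b) ∧
  (∀ (hm : Monotone L) (hc : Continuous L) (T : ℝ),
      lsMeasure L hm hc {s | s ∈ Set.Icc 0 T ∧ f s + L s - U s ≠ a} = 0) ∧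
  (∀ (hm : Monotone U) (hc : Continuous U) (T : ℝ),
      lsMeasure U hm hc {s | s ∈ Set.Icc 0 T ∧ f s + L s - U s ≠ b} = 0)


open Set Filter Topology

section lsMeasure

variable {L : ℝ → ℝ} {hm : Monotone L} {hc : Continuous L}

lemma lsMeasure_Ioc (u v : ℝ) : lsMeasure L hm hc (Ioc u v) = ENNReal.ofReal (L v - L u) :=
  StieltjesFunction.measure_Ioc _ _ _

lemma eq_of_lsMeasure_Ioc_eq_zero {u v : ℝ} (huv : u ≤ v)
    (h : lsMeasure L hm hc (Ioc u v) = 0) : L v = L u := by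
  rw [lsMeasure_Ioc, ENNReal.ofReal_eq_zero, sub_nonpos] at h
  exact h.antisymm (hm huv)

lemma lsMeasure_eq_zero_of_eventuallyEq {S : Set ℝ} (hS : ∀ x ∈ S, ∀ᶠ y in 𝓝 x, L y = L x) :
    lsMeasure L hm hc S = 0 := by
  have hcover : S ⊆ ⋃ (pq : ℚ × ℚ) (_ : L pq.1 = L pq.2), Ioc (pq.1 : ℝ) pq.2 := by
    intro x hx
    obtain ⟨l, u, ⟨hlx, hxu⟩, hsub⟩ := mem_nhds_iff_exists_Ioo_subset.1 (hS x hx)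
    obtain ⟨p, hlp, hpx⟩ := exists_rat_btwn hlx
    obtain ⟨q, hxq, hqu⟩ := exists_rat_btwn hxu
    refine mem_iUnion₂.2 ⟨(p, q), ?_, hpx, hxq.le⟩
    exact (hsub ⟨hlp, hpx.trans hxu⟩).trans (hsub ⟨hlx.trans hxq, hqu⟩).symm
  refine measure_mono_null hcover (measure_iUnion_null fun pq => measure_iUnion_null fun h => ?_)
  rw [lsMeasure_Ioc, h, sub_self, ENNReal.ofReal_zero]

end lsMeasure

/-- The one-sided Skorokhod regulator of `g` at the lower barrier `c`, started at time `t₀`. -/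
noncomputable def regulator (g : ℝ → ℝ) (c t₀ t : ℝ) : ℝ :=
  sSup ((fun s => c - g s) '' Icc t₀ (max t t₀)) ⊔ 0

namespace regulator

variable {g : ℝ → ℝ} {c t₀ : ℝ}

lemma nonneg (t : ℝ) : 0 ≤ regulator g c t₀ t := le_sup_right

lemma eq_of_le {t : ℝ} (ht : t ≤ t₀) : regulator g c t₀ t = (c - g t₀) ⊔ 0 := by
  rw [regulator, max_eq_right ht, Icc_self, image_singleton, csSup_singleton]

lemma eq_zero_of_le {t : ℝ} (ht : t ≤ t₀) (hc : c ≤ g t₀) : regulator g c t₀ t = 0 := by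
  rw [eq_of_le ht, sup_eq_right.2 (sub_nonpos.2 hc)]

variable (hg : Continuous g)
include hg

lemma bddAbove (s t : ℝ) : BddAbove ((fun r => c - g r) '' Icc s t) :=
  isCompact_Icc.bddAbove_image (continuous_const.sub hg).continuousOn

lemma sub_le {r t : ℝ} (hr : r ∈ Icc t₀ (max t t₀)) : c - g r ≤ regulator g c t₀ t :=
  (le_csSup (bddAbove hg _ _) (mem_image_of_mem _ hr)).trans le_sup_left

lemma monotone : Monotone (regulator g c t₀) := fun s _ hst =>
  sup_le_sup_right (csSup_le_csSup (bddAbove hg _ _)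
    ((nonempty_Icc.2 (le_max_right s t₀)).image _)
    (image_mono (Icc_subset_Icc le_rfl (max_le_max hst le_rfl)))) 0

lemma exists_eq {t : ℝ} (ht : t₀ ≤ t) :
    ∃ r ∈ Icc t₀ t, regulator g c t₀ t = (c - g r) ⊔ 0 := by
  obtain ⟨r, hr, hmax⟩ := isCompact_Icc.exists_isMaxOn (nonempty_Icc.2 ht)
    (continuous_const.sub hg).continuousOn
  refine ⟨r, hr, ?_⟩
  rw [regulator, max_eq_left ht, IsGreatest.csSup_eq ⟨mem_image_of_mem _ hr, ?_⟩]
  rintro _ ⟨s, hs, rfl⟩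
  exact hmax hs

lemma continuous : Continuous (regulator g c t₀) := by
  have hseg : ∀ t, Icc t₀ (max t t₀) = (fun θ : ℝ => t₀ + θ * (max t t₀ - t₀)) '' Icc 0 1 :=
    fun t => by rw [← segment_eq_Icc (le_max_right t t₀), segment_eq_image']; rfl
  have hparam : regulator g c t₀ = fun t =>
      sSup ((fun θ => c - g (t₀ + θ * (max t t₀ - t₀))) '' Icc 0 1) ⊔ 0 :=
    funext fun t => by rw [regulator, hseg, image_image]
  rw [hparam]
  exact (isCompact_Icc.continuous_sSup (by fun_prop)).sup continuous_const

/-- The regulator can only grow at times where it is attained. -/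
lemma le_of_forall_lt {s t : ℝ} (hst : s ≤ t)
    (h : ∀ r ∈ Icc s t, t₀ ≤ r → c - g r < regulator g c t₀ t) :
    regulator g c t₀ t ≤ regulator g c t₀ s := by
  by_contra! hlt
  rcases lt_or_ge t t₀ with ht | ht
  · rw [eq_of_le ht.le, eq_of_le (hst.trans ht.le)] at hlt
    exact hlt.false
  obtain ⟨r, hr, hrt⟩ := exists_eq hg ht
  have hpos : 0 < c - g r := by
    by_contra! hr0
    rw [hrt, sup_eq_right.2 hr0] at hlt
    exact (nonneg s).not_gt hlt
  rw [sup_eq_left.2 hpos.le] at hrt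
  rcases le_or_gt r s with hrs | hsr
  · exact (sub_le hg ⟨hr.1, hrs.trans (le_max_left s t₀)⟩).not_gt (hrt ▸ hlt)
  · exact (h r ⟨hsr.le, hr.2⟩ hr.1).ne hrt.symm

lemma eventuallyEq {t : ℝ} (h : t < t₀ ∨ c < g t + regulator g c t₀ t) :
    ∀ᶠ s in 𝓝 t, regulator g c t₀ s = regulator g c t₀ t := by
  have hnear : ∀ᶠ r in 𝓝 t, r < t₀ ∨ c - g r < regulator g c t₀ t := by
    rcases h with h | h
    · filter_upwards [Iio_mem_nhds h] with r hr using Or.inl hr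
    · have : c - g t < regulator g c t₀ t := by linarith
      filter_upwards [((continuous_const.sub hg).tendsto t).eventually (gt_mem_nhds this)]
        with r hr using Or.inr hr
  obtain ⟨l, u, hlu, hsub⟩ := mem_nhds_iff_exists_Ioo_subset.1 hnear
  filter_upwards [Ioo_mem_nhds hlu.1 hlu.2] with s hs
  have hbetween : ∀ r ∈ uIcc s t, t₀ ≤ r → c - g r < regulator g c t₀ t := fun r hr hr₀ =>
    ((hsub (ordConnected_Ioo.uIcc_subset hs hlu hr)).resolve_left hr₀.not_gt)
  rcases le_total s t with hst | hts
  · refine le_antisymm (monotone hg hst) (le_of_forall_lt hg hst fun r hr => ?_)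
    exact hbetween r (Icc_subset_uIcc hr)
  · refine le_antisymm (le_of_forall_lt hg hts fun r hr hr₀ => ?_) (monotone hg hts)
    exact (hbetween r (Icc_subset_uIcc' hr) hr₀).trans_le (monotone hg hts)

end regulator

/-- From time `start` on, `path` is pushed up at `lower` by its regulator until the reflected path
reaches `upper`. -/
structure Phase where
  start : ℝ
  lower : ℝ
  upper : ℝ
  path : ℝ → ℝ

namespace Phase

variable (p : Phase)

noncomputable def reflected (t : ℝ) : ℝ := p.path t + regulator p.path p.lower p.start t

/-- The first time the reflected path reaches `upper`, capped at `start + 1` so that the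
construction never has to decide whether `upper` is reached at all. -/
noncomputable def hitTime : ℝ :=
  sInf {t ∈ Icc p.start (p.start + 1) | p.reflected t = p.upper ∨ t = p.start + 1}

noncomputable def push (t : ℝ) : ℝ := regulator p.path p.lower p.start (min t p.hitTime)

/-- The next phase pushes at the other barrier; in mirrored coordinates this is again a push
from below. -/
noncomputable def next : Phase where
  start := p.hitTime
  lower := -p.upper
  upper := -p.lower
  path t := -(p.path t + regulator p.path p.lower p.start p.hitTime)

structure Valid : Prop where
  continuous_path : Continuous p.path
  lower_lt_upper : p.lower < p.upper
  path_start_mem : p.path p.start ∈ Icc p.lower p.upper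

variable {p}

lemma Valid.continuous_reflected (hp : p.Valid) : Continuous p.reflected :=
  hp.continuous_path.add (regulator.continuous hp.continuous_path)

lemma Valid.hitTime_mem (hp : p.Valid) : p.hitTime ∈ Icc p.start (p.start + 1) ∧
    (p.reflected p.hitTime = p.upper ∨ p.hitTime = p.start + 1) := by
  have hclosed :
      IsClosed {t ∈ Icc p.start (p.start + 1) | p.reflected t = p.upper ∨ t = p.start + 1} :=
    isClosed_Icc.inter ((isClosed_eq hp.continuous_reflected continuous_const).union
      (isClosed_eq continuous_id continuous_const))
  exact (isCompact_Icc.of_isClosed_subset hclosed inter_subset_left).sInf_mem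
    ⟨p.start + 1, ⟨by linarith, le_rfl⟩, Or.inr rfl⟩

lemma Valid.start_le_hitTime (hp : p.Valid) : p.start ≤ p.hitTime := hp.hitTime_mem.1.1

lemma Valid.reflected_hitTime_of_lt (hp : p.Valid) (h : p.hitTime < p.start + 1) :
    p.reflected p.hitTime = p.upper :=
  hp.hitTime_mem.2.resolve_right h.ne

lemma hitTime_le {t : ℝ} (ht : t ∈ Icc p.start (p.start + 1)) (hu : p.reflected t = p.upper) :
    p.hitTime ≤ t :=
  csInf_le ⟨p.start, fun _ hs => hs.1.1⟩ ⟨ht, Or.inl hu⟩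

lemma Valid.reflected_mem (hp : p.Valid) {t : ℝ} (ht : t ∈ Icc p.start p.hitTime) :
    p.reflected t ∈ Icc p.lower p.upper := by
  have hpush := regulator.sub_le hp.continuous_path (c := p.lower) (r := t)
    ⟨ht.1, le_max_left t p.start⟩
  refine ⟨by unfold reflected; linarith, ?_⟩
  by_contra! hgt
  have hstart : p.reflected p.start = p.path p.start := by
    rw [reflected, regulator.eq_zero_of_le le_rfl hp.path_start_mem.1, add_zero]
  obtain ⟨r, hr, hru⟩ := intermediate_value_Icc ht.1 hp.continuous_reflected.continuousOn
    ⟨hstart ▸ hp.path_start_mem.2, hgt.le⟩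
  have hrt : r < t := lt_of_le_of_ne hr.2 (by rintro rfl; exact hgt.ne' hru)
  have := hitTime_le ⟨hr.1, hr.2.trans (ht.2.trans hp.hitTime_mem.1.2)⟩ hru
  linarith [ht.2]

lemma push_of_le {t : ℝ} (ht : t ≤ p.hitTime) :
    p.push t = regulator p.path p.lower p.start t := by
  rw [push, min_eq_left ht]

lemma push_of_ge {t : ℝ} (ht : p.hitTime ≤ t) :
    p.push t = regulator p.path p.lower p.start p.hitTime := by
  rw [push, min_eq_right ht]

lemma Valid.push_eq_zero (hp : p.Valid) {t : ℝ} (ht : t ≤ p.start) : p.push t = 0 :=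
  regulator.eq_zero_of_le ((min_le_left _ _).trans ht) hp.path_start_mem.1

lemma Valid.continuous_push (hp : p.Valid) : Continuous p.push :=
  (regulator.continuous hp.continuous_path).comp (continuous_id.min continuous_const)

lemma Valid.monotone_push (hp : p.Valid) : Monotone p.push := fun _ _ hst =>
  regulator.monotone hp.continuous_path (min_le_min_right _ hst)

lemma Valid.push_eventuallyEq (hp : p.Valid) {t : ℝ}
    (h : t < p.start ∨ p.hitTime < t ∨ p.lower < p.reflected t) :
    ∀ᶠ s in 𝓝 t, p.push s = p.push t := by
  rcases lt_or_ge p.hitTime t with hst | hts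
  · filter_upwards [Ioi_mem_nhds hst] with s hs
    rw [push_of_ge hs.le, push_of_ge hst.le]
  have hR := regulator.eventuallyEq hp.continuous_path
    (h.imp_right fun h => h.resolve_left hts.not_gt)
  have hmin : Tendsto (fun s => min s p.hitTime) (𝓝 t) (𝓝 (min t p.hitTime)) :=
    (continuous_id.min continuous_const).tendsto t
  rw [min_eq_left hts] at hmin
  filter_upwards [hmin.eventually hR] with s hs
  rw [push, hs, push_of_le hts]

lemma Valid.next (hp : p.Valid) : p.next.Valid where
  continuous_path := (hp.continuous_path.add continuous_const).neg
  lower_lt_upper := neg_lt_neg hp.lower_lt_upper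
  path_start_mem := by
    have h := hp.reflected_mem ⟨hp.start_le_hitTime, le_rfl⟩
    exact ⟨neg_le_neg h.2, neg_le_neg h.1⟩

lemma Valid.exists_sub_eq_of_reflected_eq (hp : p.Valid) (h₀ : p.path p.start = p.lower)
    {t : ℝ} (ht : p.start ≤ t) (hu : p.reflected t = p.upper) :
    ∃ r ∈ Icc p.start t, p.path t - p.path r = p.upper - p.lower := by
  obtain ⟨r, hr, hRt⟩ := regulator.exists_eq hp.continuous_path (c := p.lower) ht
  rw [reflected, hRt] at hu
  rcases le_total (p.lower - p.path r) 0 with hneg | hpos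
  · rw [sup_eq_right.2 hneg] at hu
    exact ⟨p.start, ⟨le_rfl, ht⟩, by linarith⟩
  · rw [sup_eq_left.2 hpos] at hu
    exact ⟨r, hr, by linarith⟩

lemma Valid.exists_next_path_sub_eq (hp : p.Valid) (h₁ : p.hitTime < p.start + 1)
    (h₂ : p.next.hitTime < p.next.start + 1) :
    ∃ r ∈ Icc p.next.start p.next.hitTime,
      p.next.path p.next.hitTime - p.next.path r = p.upper - p.lower := by
  have h₀ : p.next.path p.next.start = p.next.lower :=
    congrArg Neg.neg (hp.reflected_hitTime_of_lt h₁)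
  have := hp.next.exists_sub_eq_of_reflected_eq h₀ hp.next.start_le_hitTime
    (hp.next.reflected_hitTime_of_lt h₂)
  simpa only [Phase.next, neg_sub_neg] using this

end Phase

section vanishing

variable {τ : ℕ → ℝ} {w : ℕ → ℝ → ℝ}

lemma finsum_eq_sum_range_of_vanishing (hτ : Monotone τ) (hw : ∀ n t, t ≤ τ n → w n t = 0)
    {N : ℕ} {t : ℝ} (ht : t ≤ τ N) : ∑ᶠ n, w n t = ∑ n ∈ Finset.range N, w n t := by
  refine finsum_eq_sum_of_support_subset _ fun n hn => ?_
  rw [Finset.coe_range, mem_Iio]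
  by_contra! hNn
  exact hn (hw n t (ht.trans (hτ hNn)))

lemma finsum_eventuallyEq_sum_range_of_vanishing (hτ : Monotone τ)
    (hw : ∀ n t, t ≤ τ n → w n t = 0) {N : ℕ} {t : ℝ} (ht : t < τ N) :
    (fun s => ∑ᶠ n, w n s) =ᶠ[𝓝 t] fun s => ∑ n ∈ Finset.range N, w n s :=
  eventually_of_mem (Iio_mem_nhds ht) fun _ hs => finsum_eq_sum_range_of_vanishing hτ hw hs.le

variable (hτ : Monotone τ) (hunb : ∀ t, ∃ N, t < τ N) (hw : ∀ n t, t ≤ τ n → w n t = 0)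
include hτ hunb hw

lemma continuous_finsum_of_vanishing (hc : ∀ n, Continuous (w n)) :
    Continuous fun t => ∑ᶠ n, w n t := by
  refine continuous_iff_continuousAt.2 fun t => ?_
  obtain ⟨N, hN⟩ := hunb t
  exact (continuous_finsetSum _ fun n _ => hc n).continuousAt.congr
    (finsum_eventuallyEq_sum_range_of_vanishing hτ hw hN).symm

lemma monotone_finsum_of_vanishing (hm : ∀ n, Monotone (w n)) :
    Monotone fun t => ∑ᶠ n, w n t := fun s t hst => by
  obtain ⟨N, hN⟩ := hunb t
  show ∑ᶠ n, w n s ≤ ∑ᶠ n, w n t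
  rw [finsum_eq_sum_range_of_vanishing hτ hw hN.le,
    finsum_eq_sum_range_of_vanishing hτ hw (hst.trans hN.le)]
  exact Finset.sum_le_sum fun n _ => hm n hst

lemma finsum_eventuallyEq_of_vanishing {t : ℝ} (h : ∀ n, ∀ᶠ s in 𝓝 t, w n s = w n t) :
    ∀ᶠ s in 𝓝 t, ∑ᶠ n, w n s = ∑ᶠ n, w n t := by
  obtain ⟨N, hN⟩ := hunb t
  filter_upwards [finsum_eventuallyEq_sum_range_of_vanishing hτ hw hN,
    (Filter.eventually_all_finset (Finset.range N)).2 fun n _ => h n] with s hs hall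
  rw [hs, finsum_eq_sum_range_of_vanishing hτ hw hN.le]
  exact Finset.sum_congr rfl hall

end vanishing

/-- The phases of the construction: phase `n` pushes up at `a` when `n` is even and down at `b`
when `n` is odd, the latter written in the mirrored coordinates `-(F + L - U)`. -/
noncomputable def phase (a b : ℝ) (F : ℝ → ℝ) (n : ℕ) : Phase :=
  Phase.next^[n] ⟨0, a, b, F⟩

section phase

variable {a b : ℝ} {F : ℝ → ℝ}

lemma phase_succ (n : ℕ) : phase a b F (n + 1) = (phase a b F n).next :=
  Function.iterate_succ_apply' _ _ _

lemma start_phase_succ (n : ℕ) : (phase a b F (n + 1)).start = (phase a b F n).hitTime := by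
  rw [phase_succ]; rfl

lemma phase_barriers (n : ℕ) :
    (phase a b F n).lower = (if Even n then a else -b) ∧
      (phase a b F n).upper = (if Even n then b else -a) := by
  induction n with
  | zero => exact ⟨rfl, rfl⟩
  | succ n ih =>
    rw [phase_succ]
    by_cases hn : Even n <;> simp_all [Phase.next, Nat.even_add_one]

lemma upper_sub_lower_phase (n : ℕ) : (phase a b F n).upper - (phase a b F n).lower = b - a := by
  obtain ⟨hl, hu⟩ := phase_barriers (a := a) (b := b) (F := F) n
  split_ifs at hl hu <;> linarith

lemma neg_one_pow_mul_lower_phase (n : ℕ) :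
    (-1) ^ n * (phase a b F n).lower = if Even n then a else b := by
  rw [(phase_barriers n).1]
  split_ifs with hn
  · rw [hn.neg_one_pow, one_mul]
  · rw [(Nat.not_even_iff_odd.1 hn).neg_one_pow]; ring

lemma abs_path_phase_sub (n : ℕ) (u v : ℝ) :
    |(phase a b F n).path u - (phase a b F n).path v| = |F u - F v| := by
  induction n with
  | zero => rfl
  | succ n ih => rw [phase_succ, ← ih, ← abs_neg]; simp only [Phase.next]; ring_nf

variable (hab : a < b) (hF : Continuous F) (h0 : F 0 ∈ Icc a b)
include hab hF h0

lemma phase_valid (n : ℕ) : (phase a b F n).Valid := by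
  induction n with
  | zero => exact ⟨hF, hab, h0⟩
  | succ n ih => rw [phase_succ]; exact ih.next

lemma monotone_start_phase : Monotone fun n => (phase a b F n).start :=
  monotone_nat_of_le_succ fun n => by
    rw [start_phase_succ]; exact (phase_valid hab hF h0 n).start_le_hitTime

lemma start_phase_nonneg (n : ℕ) : 0 ≤ (phase a b F n).start :=
  monotone_start_phase hab hF h0 (Nat.zero_le n)

/-- Two consecutive phases that are shorter than the cap force an oscillation `b - a` of `F`,
which uniform continuity forbids on a bounded time interval. -/
lemma exists_lt_start_phase (t : ℝ) : ∃ n, t < (phase a b F n).start := by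
  by_contra! hle
  set τ := fun n => (phase a b F n).start
  have hτ : Monotone τ := monotone_start_phase hab hF h0
  obtain ⟨δ, hδ, hunif⟩ := Metric.uniformContinuousOn_iff.1
    (isCompact_Icc.uniformContinuousOn_of_continuous (hF.continuousOn (s := Icc 0 t)))
    (b - a) (sub_pos.2 hab)
  obtain ⟨N, hN⟩ := Metric.cauchySeq_iff'.1
    (tendsto_atTop_ciSup hτ ⟨t, forall_mem_range.2 hle⟩).cauchySeq (min δ 1) (lt_min hδ one_pos)
  have hclose : τ (N + 2) - τ N < min δ 1 := by
    have := hN (N + 2) (by omega)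
    rw [Real.dist_eq, abs_lt] at this
    exact this.2
  have hτ₀ : τ N ≤ τ (N + 1) := hτ (Nat.le_succ N)
  have hτ₁ : τ (N + 1) ≤ τ (N + 2) := hτ (Nat.le_succ (N + 1))
  have e₁ : (phase a b F N).hitTime = τ (N + 1) := (start_phase_succ N).symm
  have e₂ : (phase a b F N).next.start = τ (N + 1) := by rw [← phase_succ]
  have e₃ : (phase a b F N).next.hitTime = τ (N + 2) := by rw [← phase_succ, ← start_phase_succ]
  have hδ₁ := min_le_right δ 1
  obtain ⟨r, hr, hosc⟩ := (phase_valid hab hF h0 N).exists_next_path_sub_eq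
    (by rw [e₁]; exact lt_of_le_of_lt hτ₁ (by linarith)) (by rw [e₂, e₃]; linarith)
  rw [e₂, e₃] at hr
  rw [e₃, ← phase_succ, upper_sub_lower_phase] at hosc
  have hdist := hunif (τ (N + 2)) ⟨start_phase_nonneg hab hF h0 _, hle _⟩ r
    ⟨(start_phase_nonneg hab hF h0 _).trans hr.1, hr.2.trans (hle _)⟩
    (by rw [Real.dist_eq, abs_lt]; constructor <;> linarith [min_le_left δ 1, hr.1, hr.2])
  rw [Real.dist_eq, ← abs_path_phase_sub (N + 1), hosc, abs_of_pos (sub_pos.2 hab)] at hdist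
  exact hdist.false

end phase

noncomputable def pushSum (a b : ℝ) (F : ℝ → ℝ) (S : Set ℕ) (t : ℝ) : ℝ :=
  ∑ᶠ n, S.indicator (fun n => (phase a b F n).push t) n

section construction

variable {a b : ℝ} {F : ℝ → ℝ} (hab : a < b) (hF : Continuous F) (h0 : F 0 ∈ Icc a b)
include hab hF h0

lemma path_phase_eq (n : ℕ) {t : ℝ} (ht : (phase a b F n).start ≤ t) :
    (phase a b F n).path t =
      (-1) ^ n * (F t + ∑ k ∈ Finset.range n, (-1) ^ k * (phase a b F k).push t) := by
  induction n with
  | zero => simp [phase]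
  | succ n ih =>
    have hhit : (phase a b F n).hitTime ≤ t := start_phase_succ (F := F) n ▸ ht
    have hsq : ((-1 : ℝ) ^ n) ^ 2 = 1 := by rw [sq, ← mul_pow]; simp
    rw [phase_succ, Finset.sum_range_succ, pow_succ]
    simp only [Phase.next]
    rw [ih ((phase_valid hab hF h0 n).start_le_hitTime.trans hhit), ← Phase.push_of_ge hhit]
    linear_combination (phase a b F n).push t * hsq

variable (S : Set ℕ)

lemma indicator_push_vanishing (n : ℕ) (t : ℝ) (ht : t ≤ (phase a b F n).start) :
    S.indicator (fun n => (phase a b F n).push t) n = 0 := by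
  by_cases hn : n ∈ S
  · rw [indicator_of_mem hn, (phase_valid hab hF h0 n).push_eq_zero ht]
  · exact indicator_of_notMem hn _

lemma pushSum_eq_sum_range {N : ℕ} {t : ℝ} (ht : t ≤ (phase a b F N).start) :
    pushSum a b F S t =
      ∑ n ∈ Finset.range N, S.indicator (fun n => (phase a b F n).push t) n :=
  finsum_eq_sum_range_of_vanishing (w := fun n t => S.indicator (fun n => (phase a b F n).push t) n)
    (monotone_start_phase hab hF h0) (indicator_push_vanishing hab hF h0 S) ht

lemma pushSum_of_nonpos {t : ℝ} (ht : t ≤ 0) : pushSum a b F S t = 0 :=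
  pushSum_eq_sum_range hab hF h0 S (N := 0) ht

lemma continuous_pushSum : Continuous (pushSum a b F S) := by
  refine continuous_finsum_of_vanishing (monotone_start_phase hab hF h0)
    (exists_lt_start_phase hab hF h0) (indicator_push_vanishing hab hF h0 S) fun n => ?_
  by_cases hn : n ∈ S
  · simpa only [indicator_of_mem hn] using (phase_valid hab hF h0 n).continuous_push
  · simpa only [indicator_of_notMem hn] using continuous_const

lemma monotone_pushSum : Monotone (pushSum a b F S) := by
  refine monotone_finsum_of_vanishing (monotone_start_phase hab hF h0)
    (exists_lt_start_phase hab hF h0) (indicator_push_vanishing hab hF h0 S) fun n => ?_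
  by_cases hn : n ∈ S
  · simpa only [indicator_of_mem hn] using (phase_valid hab hF h0 n).monotone_push
  · simpa only [indicator_of_notMem hn] using monotone_const

lemma pushSum_eventuallyEq {t : ℝ}
    (h : ∀ n ∈ S, ∀ᶠ s in 𝓝 t, (phase a b F n).push s = (phase a b F n).push t) :
    ∀ᶠ s in 𝓝 t, pushSum a b F S s = pushSum a b F S t := by
  refine finsum_eventuallyEq_of_vanishing (monotone_start_phase hab hF h0)
    (exists_lt_start_phase hab hF h0) (indicator_push_vanishing hab hF h0 S) fun n => ?_
  by_cases hn : n ∈ S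
  · simpa only [indicator_of_mem hn] using h n hn
  · simp only [indicator_of_notMem hn, eventually_true]

lemma pushSum_even_sub_odd {N : ℕ} {t : ℝ} (ht : t ≤ (phase a b F N).start) :
    pushSum a b F {n | Even n} t - pushSum a b F {n | Odd n} t =
      ∑ k ∈ Finset.range N, (-1) ^ k * (phase a b F k).push t := by
  rw [pushSum_eq_sum_range hab hF h0 _ ht, pushSum_eq_sum_range hab hF h0 _ ht,
    ← Finset.sum_sub_distrib]
  refine Finset.sum_congr rfl fun k _ => ?_
  rcases Nat.even_or_odd k with hk | hk
  · rw [indicator_of_mem (show k ∈ {n | Even n} from hk),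
      indicator_of_notMem (show k ∉ {n | Odd n} from Nat.not_odd_iff_even.2 hk), hk.neg_one_pow]
    ring
  · rw [indicator_of_notMem (show k ∉ {n | Even n} from Nat.not_even_iff_odd.2 hk),
      indicator_of_mem (show k ∈ {n | Odd n} from hk), hk.neg_one_pow]
    ring

lemma reflected_phase_eq {n : ℕ} {t : ℝ}
    (ht : t ∈ Icc (phase a b F n).start (phase a b F n).hitTime) :
    F t + pushSum a b F {n | Even n} t - pushSum a b F {n | Odd n} t =
      (-1) ^ n * (phase a b F n).reflected t := by
  have hsq : ((-1 : ℝ) ^ n) ^ 2 = 1 := by rw [sq, ← mul_pow]; simp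
  rw [add_sub_assoc,
    pushSum_even_sub_odd hab hF h0 (N := n + 1) (start_phase_succ (F := F) n ▸ ht.2),
    Finset.sum_range_succ, Phase.reflected, path_phase_eq hab hF h0 n ht.1,
    ← Phase.push_of_le ht.2]
  linear_combination -(F t + ∑ k ∈ Finset.range n, (-1) ^ k * (phase a b F k).push t) * hsq

lemma exists_mem_phase {t : ℝ} (ht : 0 ≤ t) :
    ∃ n, t ∈ Icc (phase a b F n).start (phase a b F n).hitTime := by
  obtain ⟨N, hN⟩ := exists_lt_start_phase hab hF h0 t
  induction N with
  | zero => exact absurd hN ht.not_gt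
  | succ N ih =>
    by_cases h : t < (phase a b F N).start
    · exact ih h
    · exact ⟨N, not_lt.1 h, start_phase_succ (F := F) N ▸ hN.le⟩

lemma reflected_mem_Icc {t : ℝ} (ht : 0 ≤ t) :
    F t + pushSum a b F {n | Even n} t - pushSum a b F {n | Odd n} t ∈ Icc a b := by
  obtain ⟨n, hn⟩ := exists_mem_phase hab hF h0 ht
  have hmem := (phase_valid hab hF h0 n).reflected_mem hn
  obtain ⟨hl, hu⟩ := phase_barriers (a := a) (b := b) (F := F) n
  rw [reflected_phase_eq hab hF h0 hn]
  rcases Nat.even_or_odd n with he | ho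
  · rw [he.neg_one_pow, one_mul]
    simpa only [hl, hu, if_pos he] using hmem
  · rw [ho.neg_one_pow, neg_one_mul]
    simp only [hl, hu, if_neg (Nat.not_even_iff_odd.2 ho)] at hmem
    exact ⟨le_neg.2 hmem.2, neg_le.2 hmem.1⟩

lemma push_phase_eventuallyEq (n : ℕ) {t : ℝ}
    (h : F t + pushSum a b F {n | Even n} t - pushSum a b F {n | Odd n} t ≠
      (-1) ^ n * (phase a b F n).lower) :
    ∀ᶠ s in 𝓝 t, (phase a b F n).push s = (phase a b F n).push t := by
  refine (phase_valid hab hF h0 n).push_eventuallyEq ?_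
  by_cases hn : t ∈ Icc (phase a b F n).start (phase a b F n).hitTime
  · refine Or.inr (Or.inr (lt_of_le_of_ne ((phase_valid hab hF h0 n).reflected_mem hn).1 ?_))
    rintro heq
    exact h (by rw [reflected_phase_eq hab hF h0 hn, heq])
  · rw [mem_Icc, not_and_or, not_le, not_le] at hn
    exact hn.imp_right Or.inl

lemma pushSum_even_eventuallyEq {t : ℝ}
    (h : F t + pushSum a b F {n | Even n} t - pushSum a b F {n | Odd n} t ≠ a) :
    ∀ᶠ s in 𝓝 t, pushSum a b F {n | Even n} s = pushSum a b F {n | Even n} t :=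
  pushSum_eventuallyEq hab hF h0 _ fun n hn => push_phase_eventuallyEq hab hF h0 n
    (by rwa [neg_one_pow_mul_lower_phase, if_pos (show Even n from hn)])

lemma pushSum_odd_eventuallyEq {t : ℝ}
    (h : F t + pushSum a b F {n | Even n} t - pushSum a b F {n | Odd n} t ≠ b) :
    ∀ᶠ s in 𝓝 t, pushSum a b F {n | Odd n} s = pushSum a b F {n | Odd n} t :=
  pushSum_eventuallyEq hab hF h0 _ fun n hn => push_phase_eventuallyEq hab hF h0 n
    (by rwa [neg_one_pow_mul_lower_phase, if_neg (Nat.not_even_iff_odd.2 hn)])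

theorem isSkorokhodPair_pushSum :
    IsSkorokhodPair a b F (pushSum a b F {n | Even n}) (pushSum a b F {n | Odd n}) := by
  refine ⟨continuous_pushSum hab hF h0 _, continuous_pushSum hab hF h0 _,
    monotone_pushSum hab hF h0 _, monotone_pushSum hab hF h0 _,
    pushSum_of_nonpos hab hF h0 _ le_rfl, pushSum_of_nonpos hab hF h0 _ le_rfl,
    fun t ht => reflected_mem_Icc hab hF h0 ht, fun _ _ _ => ?_, fun _ _ _ => ?_⟩
  · exact lsMeasure_eq_zero_of_eventuallyEq fun t ht => pushSum_even_eventuallyEq hab hF h0 ht.2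
  · exact lsMeasure_eq_zero_of_eventuallyEq fun t ht => pushSum_odd_eventuallyEq hab hF h0 ht.2

end construction

/-- Apply the hypothesis from the last time at which `D` is nonpositive. -/
lemma nonpos_of_forall_Ioc_pos_le {D : ℝ → ℝ} (hD : Continuous D) (h0 : D 0 ≤ 0)
    (hstep : ∀ u v, 0 ≤ u → u ≤ v → (∀ s ∈ Ioc u v, 0 < D s) → D v ≤ D u)
    {t : ℝ} (ht : 0 ≤ t) : D t ≤ 0 := by
  by_contra! hpos
  set A := {s ∈ Icc 0 t | D s ≤ 0}
  have hA : IsCompact A := isCompact_Icc.inter_right (isClosed_le hD continuous_const)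
  have hmem : sSup A ∈ A := hA.sSup_mem ⟨0, ⟨le_rfl, ht⟩, h0⟩
  have hle := hstep (sSup A) t hmem.1.1 hmem.1.2 fun s hs => by
    by_contra! hs'
    exact hs.1.not_ge (le_csSup hA.bddAbove ⟨⟨hmem.1.1.trans hs.1.le, hs.2⟩, hs'⟩)
  linarith [hmem.2]

namespace IsSkorokhodPair

variable {a b : ℝ} {f f' L U L' U' : ℝ → ℝ}

lemma congr (h : IsSkorokhodPair a b f L U) (hff' : ∀ t, 0 ≤ t → f t = f' t) :
    IsSkorokhodPair a b f' L U := by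
  obtain ⟨hLc, hUc, hLm, hUm, hL0, hU0, hZ, hLa, hUb⟩ := h
  have hset : ∀ T c, {s | s ∈ Icc 0 T ∧ f' s + L s - U s ≠ c} =
      {s | s ∈ Icc 0 T ∧ f s + L s - U s ≠ c} := fun T c =>
    Set.ext fun s => and_congr_right fun hs => by rw [hff' s hs.1]
  refine ⟨hLc, hUc, hLm, hUm, hL0, hU0, fun t ht => hff' t ht ▸ hZ t ht,
    fun hm hc T => ?_, fun hm hc T => ?_⟩
  · rw [hset]; exact hLa hm hc T
  · rw [hset]; exact hUb hm hc T

lemma lower_eq (h : IsSkorokhodPair a b f L U) {u v : ℝ} (hu : 0 ≤ u) (huv : u ≤ v)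
    (hne : ∀ s ∈ Ioc u v, f s + L s - U s ≠ a) : L v = L u := by
  obtain ⟨hLc, -, hLm, -, -, -, -, hLa, -⟩ := h
  refine eq_of_lsMeasure_Ioc_eq_zero huv (measure_mono_null ?_ (hLa hLm hLc v))
  exact fun s hs => ⟨⟨hu.trans hs.1.le, hs.2⟩, hne s hs⟩

lemma upper_eq (h : IsSkorokhodPair a b f L U) {u v : ℝ} (hu : 0 ≤ u) (huv : u ≤ v)
    (hne : ∀ s ∈ Ioc u v, f s + L s - U s ≠ b) : U v = U u := by
  obtain ⟨-, hUc, -, hUm, -, -, -, -, hUb⟩ := h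
  refine eq_of_lsMeasure_Ioc_eq_zero huv (measure_mono_null ?_ (hUb hUm hUc v))
  exact fun s hs => ⟨⟨hu.trans hs.1.le, hs.2⟩, hne s hs⟩

/-- While `Z > Z'`, `Z` is off `a` and `Z'` is off `b`, so `L` and `U'` are frozen and `Z - Z'`
can only decrease. -/
lemma reflected_le (h : IsSkorokhodPair a b f L U) (h' : IsSkorokhodPair a b f L' U')
    {t : ℝ} (ht : 0 ≤ t) : f t + L t - U t ≤ f t + L' t - U' t := by
  obtain ⟨hLc, hUc, -, hUm, hL0, hU0, hZ, -, -⟩ := id h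
  obtain ⟨hLc', hUc', hLm', -, hL0', hU0', hZ', -, -⟩ := id h'
  have hstep : ∀ u v, 0 ≤ u → u ≤ v → (∀ s ∈ Ioc u v, 0 < L s - U s - (L' s - U' s)) →
      L v - U v - (L' v - U' v) ≤ L u - U u - (L' u - U' u) := fun u v hu huv hpos => by
    have hL := h.lower_eq hu huv fun s hs => by
      linarith [hpos s hs, (hZ' s (hu.trans hs.1.le)).1]
    have hU' := h'.upper_eq hu huv fun s hs => by
      linarith [hpos s hs, (hZ s (hu.trans hs.1.le)).2]
    linarith [hUm huv, hLm' huv]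
  have hD : L t - U t - (L' t - U' t) ≤ 0 :=
    nonpos_of_forall_Ioc_pos_le (D := fun s => L s - U s - (L' s - U' s))
      ((hLc.sub hUc).sub (hLc'.sub hUc')) (by simp [hL0, hU0, hL0', hU0']) hstep ht
  linarith

lemma exists_forall_Ioc_ne (h : IsSkorokhodPair a b f L U) (hf : ContinuousOn f (Ici 0))
    {x c : ℝ} (hx : 0 ≤ x) (hne : f x + L x - U x ≠ c) :
    ∃ u ∈ Ioi x, ∀ y ∈ Ioo x u, ∀ s ∈ Ioc x y, f s + L s - U s ≠ c := by
  obtain ⟨hLc, hUc, -⟩ := h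
  have hcont : ContinuousWithinAt (fun s => f s + L s - U s) (Ioi x) x :=
    (((hf x hx).mono fun s hs => hx.trans (le_of_lt hs)).add
      hLc.continuousWithinAt).sub hUc.continuousWithinAt
  obtain ⟨u, hu, hsub⟩ := mem_nhdsGT_iff_exists_Ioo_subset.1 (hcont.eventually_ne hne)
  exact ⟨u, hu, fun y hy s hs => hsub ⟨hs.1, hs.2.trans_lt hy.2⟩⟩

/-- Once `Z = Z'`, `L - L' = U - U'` is frozen near every time: near times off `a` both `L` and
`L'` are frozen, near times off `b` both `U` and `U'` are. -/
theorem unique (hab : a < b) (hf : ContinuousOn f (Ici 0)) (h : IsSkorokhodPair a b f L U)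
    (h' : IsSkorokhodPair a b f L' U') {t : ℝ} (ht : 0 ≤ t) : L t = L' t ∧ U t = U' t := by
  have hZ : ∀ s, 0 ≤ s → L s - U s = L' s - U' s := fun s hs => by
    linarith [h.reflected_le h' hs, h'.reflected_le h hs]
  obtain ⟨hLc, -, -, -, hL0, -⟩ := id h
  obtain ⟨hLc', -, -, -, hL0', -⟩ := id h'
  suffices hI : Icc 0 t ⊆ {x | L x = L' x} by
    have hLt : L t = L' t := hI ⟨ht, le_rfl⟩
    exact ⟨hLt, by linarith [hZ t ht]⟩
  refine IsClosed.Icc_subset_of_forall_mem_nhdsWithin ((isClosed_eq hLc hLc').inter isClosed_Icc)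
    (by simp [hL0, hL0']) fun x ⟨hx, hxI⟩ => ?_
  have hoff : ∀ c y, (∀ s ∈ Ioc x y, f s + L s - U s ≠ c) →
      ∀ s ∈ Ioc x y, f s + L' s - U' s ≠ c := fun c y hne s hs heq =>
    hne s hs (by linarith [hZ s (hxI.1.trans hs.1.le)])
  rw [mem_nhdsGT_iff_exists_Ioo_subset]
  by_cases hxa : f x + L x - U x = a
  · obtain ⟨u, hu, hne⟩ := h.exists_forall_Ioc_ne hf hxI.1 (by rw [hxa]; exact hab.ne)
    refine ⟨u, hu, fun y hy => show L y = L' y from ?_⟩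
    have hU := h.upper_eq hxI.1 hy.1.le (hne y hy)
    have hU' := h'.upper_eq hxI.1 hy.1.le (hoff b y (hne y hy))
    linarith [hZ x hxI.1, hZ y (hxI.1.trans hy.1.le), show L x = L' x from hx]
  · obtain ⟨u, hu, hne⟩ := h.exists_forall_Ioc_ne hf hxI.1 hxa
    refine ⟨u, hu, fun y hy => ?_⟩
    have hL := h.lower_eq hxI.1 hy.1.le (hne y hy)
    have hL' := h'.lower_eq hxI.1 hy.1.le (hoff a y (hne y hy))
    exact hL.trans (hx.trans hL'.symm)

end IsSkorokhodPair

/-- existence and uniqueness (on `[0, ∞)`) of the solution to the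
two-sided Skorokhod reflection problem on `[a, b]` for a continuous driving path
`f` with `a ≤ f(0) ≤ b`. -/
theorem stmt11 (a b : ℝ) (hab : a < b) (f : ℝ → ℝ)
    (hf : ContinuousOn f (Set.Ici 0)) (hf0a : a ≤ f 0) (hf0b : f 0 ≤ b) :
    ∃ L U : ℝ → ℝ, IsSkorokhodPair a b f L U ∧
      ∀ L' U' : ℝ → ℝ, IsSkorokhodPair a b f L' U' →
        ∀ t, 0 ≤ t → L' t = L t ∧ U' t = U t := by
  set F : ℝ → ℝ := fun t => f (max t 0)
  have hF : Continuous F :=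
    hf.comp_continuous (continuous_id.max continuous_const) fun t => le_max_right t 0
  have hFf : ∀ t, 0 ≤ t → F t = f t := fun t ht => by simp only [F, max_eq_left ht]
  have hpair := (isSkorokhodPair_pushSum hab hF
    (show F 0 ∈ Icc a b by rw [hFf 0 le_rfl]; exact ⟨hf0a, hf0b⟩)).congr hFf
  exact ⟨_, _, hpair, fun L' U' h' t ht => h'.unique hab hf hpair ht⟩
end

section
/- Let λ, τ > 0 with λτ < 1, let T ∈ ℝ, and set φ = √(τ/λ) and ξ = (1 + √(λτ))/(1 − √(λτ)). Define h₂(t) = 1 + √(λτ)·(1 + ξ e^{2φ(T−t)})/(1 − ξ e^{2φ(T−t)}) for t ≤ T. Then the denominator 1 − ξ e^{2φ(T−t)} is nonzero for all t ≤ T, h₂(T) = 0, and h₂ is differentiable on (−∞, T] with h₂′(t) + (1 − h₂(t))²/λ − τ = 0 for all t ≤ T. -/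
/-!
Write `s = √(λτ)` and `E = ξ e^{2φ(T-t)}`, so `h₂ = 1 + s (1 + E)/(1 - E)` and `E' = -2φE`.
Then `h₂' = -4sφE/(1-E)²` and `(1-h₂)²/λ - τ = (s²(1+E)² - λτ(1-E)²)/(λ(1-E)²)`, and the
two identities `s² = λτ`, `sφ = τ` make the Riccati residual vanish. Since `0 < s < 1` we
have `ξ > 1`, while `e^{2φ(T-t)} ≥ 1` for `t ≤ T`, so the denominator never vanishes; and
`ξ = (1+s)/(1-s)` is exactly the choice giving `h₂(T) = 0`.
-/

open Real

noncomputable def riccatiSolution (s φ ξ T : ℝ) (t : ℝ) : ℝ :=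
  1 + s * (1 + ξ * exp (2 * φ * (T - t))) / (1 - ξ * exp (2 * φ * (T - t)))

theorem hasDerivAt_riccatiSolution {lam tau s φ ξ T t : ℝ} (hlam : lam ≠ 0)
    (hs : s ^ 2 = lam * tau) (hsφ : s * φ = tau)
    (hden : 1 - ξ * exp (2 * φ * (T - t)) ≠ 0) :
    HasDerivAt (riccatiSolution s φ ξ T)
      (tau - (1 - riccatiSolution s φ ξ T t) ^ 2 / lam) t := by
  have hexp : HasDerivAt (fun x => exp (2 * φ * (T - x)))
      (exp (2 * φ * (T - t)) * (2 * φ * (-1))) t :=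
    (((hasDerivAt_id t).const_sub T).const_mul (2 * φ)).exp
  refine (((((hexp.const_mul ξ).const_add 1).const_mul s).div
    ((hexp.const_mul ξ).const_sub 1) hden).const_add 1).congr_deriv ?_
  unfold riccatiSolution
  field_simp
  linear_combination (-4 * lam * ξ * exp (2 * φ * (T - t))) * hsφ
    + (1 + ξ * exp (2 * φ * (T - t))) ^ 2 * hs

theorem one_sub_mul_exp_ne_zero {ξ c : ℝ} (hξ : 1 < ξ) (hc : 0 ≤ c) : 1 - ξ * exp c ≠ 0 := by
  nlinarith [one_le_exp hc]

theorem riccatiSolution_self {s φ T : ℝ} (hs0 : s ≠ 0) (hs1 : s ≠ 1) :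
    riccatiSolution s φ ((1 + s) / (1 - s)) T T = 0 := by
  have h1s : 1 - s ≠ 0 := sub_ne_zero.2 (Ne.symm hs1)
  rw [riccatiSolution, sub_self, mul_zero, exp_zero, mul_one,
    show 1 - (1 + s) / (1 - s) = -(2 * s) / (1 - s) by field_simp; ring]
  field_simp
  ring

theorem sqrt_div_mul_sqrt_mul {a b : ℝ} (ha : 0 < a) (hb : 0 ≤ b) :
    √(b / a) * √(a * b) = b := by
  rw [← sqrt_mul (div_nonneg hb ha.le), show b / a * (a * b) = b ^ 2 by field_simp,
    sqrt_sq hb]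

/-- the explicit function
`h₂(t) = 1 + √(λτ)·(1 + ξ e^{2φ(T−t)})/(1 − ξ e^{2φ(T−t)})` (with `φ = √(τ/λ)`,
`ξ = (1+√(λτ))/(1−√(λτ))`, `λτ < 1`) has nonvanishing denominator for `t ≤ T`,
satisfies the terminal condition `h₂(T) = 0`, and solves the Riccati ODE
`h₂′ + (1 − h₂)²/λ − τ = 0` on `(−∞, T]`. -/
theorem stmt13 (lam tau T : ℝ) (hlam : 0 < lam) (htau : 0 < tau)
    (hlt : lam * tau < 1) :
    let φ : ℝ := Real.sqrt (tau / lam)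
    let ξ : ℝ := (1 + Real.sqrt (lam * tau)) / (1 - Real.sqrt (lam * tau))
    let h₂ : ℝ → ℝ := fun t =>
      1 + Real.sqrt (lam * tau) * (1 + ξ * Real.exp (2 * φ * (T - t))) /
            (1 - ξ * Real.exp (2 * φ * (T - t)))
    (∀ t ≤ T, 1 - ξ * Real.exp (2 * φ * (T - t)) ≠ 0) ∧
    h₂ T = 0 ∧
    (∀ t ≤ T, DifferentiableAt ℝ h₂ t ∧
      deriv h₂ t + (1 - h₂ t) ^ 2 / lam - tau = 0) := by
  intro φ ξ h₂
  set s := √(lam * tau)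
  have hs0 : 0 < s := sqrt_pos.2 (mul_pos hlam htau)
  have hs1 : s < 1 := (sqrt_lt' one_pos).2 (by linarith)
  have hs2 : s ^ 2 = lam * tau := sq_sqrt (mul_pos hlam htau).le
  have hsφ : s * φ = tau := (mul_comm _ _).trans (sqrt_div_mul_sqrt_mul hlam htau.le)
  have hξ : 1 < ξ := (one_lt_div (by linarith)).2 (by linarith)
  have hden : ∀ t ≤ T, 1 - ξ * exp (2 * φ * (T - t)) ≠ 0 := fun t ht =>
    one_sub_mul_exp_ne_zero hξ
      (mul_nonneg (mul_nonneg zero_le_two (sqrt_nonneg _)) (sub_nonneg.2 ht))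
  refine ⟨hden, riccatiSolution_self hs0.ne' hs1.ne, fun t ht => ?_⟩
  have hh := hasDerivAt_riccatiSolution hlam.ne' hs2 hsφ (hden t ht)
  refine ⟨hh.differentiableAt, ?_⟩
  rw [show h₂ = riccatiSolution s φ ξ T from rfl, hh.deriv]
  ring
end

section
/- Let λ > 0, τ, σ, μ ∈ ℝ and T > 0. Suppose h₂, h₁, h₀ : [0,T] → ℝ are differentiable and satisfy, for all t ∈ [0,T]: h₂′(t) + (1 − h₂(t))²/λ − τ = 0; h₁′(t) + μh₂(t) − (1 − h₂(t))h₁(t)/λ = 0; h₀′(t) + (σ²/2)h₂(t) + μh₁(t) + h₁(t)²/(2λ) = 0; with h₂(T) = h₁(T) = h₀(T) = 0. Then V(t,z) := ½h₂(t)z² + h₁(t)z + h₀(t) satisfies V(T,z) = 0 for all z ∈ ℝ and the Hamilton–Jacobi–Bellman equation 0 = ∂ₜV(t,z) + (σ²/2)∂_{zz}V(t,z) + μ∂_zV(t,z) + (z − ∂_zV(t,z))²/(2λ) − (τ/2)z² for all (t,z) ∈ [0,T] × ℝ. -/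
/-!
For each fixed `t`, `V t` is a quadratic polynomial in `z`, so `∂_z V = h₂ z + h₁` and
`∂_{zz} V = h₂`. Substituting these, the HJB residual becomes a quadratic polynomial in `z`
whose coefficients of `z²/2`, `z` and `1` are exactly the left-hand sides of the three Riccati
equations, hence it vanishes.
-/

section QuadraticAnsatz

variable (a b c : ℝ)

theorem hasDerivAt_half_quadratic (z : ℝ) :
    HasDerivAt (fun w : ℝ => 1 / 2 * a * w ^ 2 + b * w + c) (a * z + b) z := by
  have h := (((hasDerivAt_pow 2 z).const_mul (1 / 2 * a)).fun_add
    ((hasDerivAt_id' z).const_mul b)).add_const c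
  exact h.congr_deriv (by norm_num; ring)

theorem deriv_half_quadratic :
    deriv (fun w : ℝ => 1 / 2 * a * w ^ 2 + b * w + c) = fun z => a * z + b :=
  funext fun z => (hasDerivAt_half_quadratic a b c z).deriv

theorem deriv_deriv_half_quadratic (z : ℝ) :
    deriv (deriv (fun w : ℝ => 1 / 2 * a * w ^ 2 + b * w + c)) z = a := by
  rw [deriv_half_quadratic]
  simp

end QuadraticAnsatz

theorem HasDerivAt.half_quadratic_coeffs {h₂ h₁ h₀ : ℝ → ℝ} {h₂' h₁' h₀' t : ℝ}
    (hd2 : HasDerivAt h₂ h₂' t) (hd1 : HasDerivAt h₁ h₁' t) (hd0 : HasDerivAt h₀ h₀' t)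
    (z : ℝ) :
    HasDerivAt (fun s => 1 / 2 * h₂ s * z ^ 2 + h₁ s * z + h₀ s)
      (1 / 2 * h₂' * z ^ 2 + h₁' * z + h₀') t :=
  ((hd2.const_mul (1 / 2)).mul_const (z ^ 2)).add (hd1.mul_const z) |>.add hd0

theorem stmt14_general (lam τ σ μ T : ℝ)
    (h₂ h₁ h₀ h₂' h₁' h₀' : ℝ → ℝ)
    (hd2 : ∀ t ∈ Set.Icc (0 : ℝ) T, HasDerivAt h₂ (h₂' t) t)
    (hd1 : ∀ t ∈ Set.Icc (0 : ℝ) T, HasDerivAt h₁ (h₁' t) t)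
    (hd0 : ∀ t ∈ Set.Icc (0 : ℝ) T, HasDerivAt h₀ (h₀' t) t)
    (ode2 : ∀ t ∈ Set.Icc (0 : ℝ) T, h₂' t + (1 - h₂ t) ^ 2 / lam - τ = 0)
    (ode1 : ∀ t ∈ Set.Icc (0 : ℝ) T,
      h₁' t + μ * h₂ t - (1 - h₂ t) * h₁ t / lam = 0)
    (ode0 : ∀ t ∈ Set.Icc (0 : ℝ) T,
      h₀' t + σ ^ 2 / 2 * h₂ t + μ * h₁ t + h₁ t ^ 2 / (2 * lam) = 0)
    (hT2 : h₂ T = 0) (hT1 : h₁ T = 0) (hT0 : h₀ T = 0) :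
    let V : ℝ → ℝ → ℝ := fun t z => (1 / 2) * h₂ t * z ^ 2 + h₁ t * z + h₀ t
    (∀ z : ℝ, V T z = 0) ∧
    ∀ t ∈ Set.Icc (0 : ℝ) T, ∀ z : ℝ,
      0 = deriv (fun s => V s z) t + σ ^ 2 / 2 * deriv (deriv (V t)) z
            + μ * deriv (V t) z + (z - deriv (V t) z) ^ 2 / (2 * lam)
            - τ / 2 * z ^ 2 := by
  intro V
  refine ⟨fun z => by simp [V, hT2, hT1, hT0], fun t ht z => ?_⟩
  rw [((hd2 t ht).half_quadratic_coeffs (hd1 t ht) (hd0 t ht) z).deriv,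
    deriv_deriv_half_quadratic, deriv_half_quadratic]
  linear_combination (-z ^ 2 / 2) * ode2 t ht - z * ode1 t ht - ode0 t ht

/-- verification that the quadratic ansatz
`V(t,z) = ½h₂(t)z² + h₁(t)z + h₀(t)` built from solutions of the Riccati system
solves the finite-horizon HJB equation
`0 = ∂ₜV + (σ²/2)∂_{zz}V + μ∂_zV + (z − ∂_zV)²/(2λ) − (τ/2)z²`
with terminal condition `V(T,·) = 0`. -/
theorem stmt14 (lam τ σ μ T : ℝ) (hlam : 0 < lam) (hT : 0 < T)
    (h₂ h₁ h₀ h₂' h₁' h₀' : ℝ → ℝ)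
    (hd2 : ∀ t ∈ Set.Icc (0 : ℝ) T, HasDerivAt h₂ (h₂' t) t)
    (hd1 : ∀ t ∈ Set.Icc (0 : ℝ) T, HasDerivAt h₁ (h₁' t) t)
    (hd0 : ∀ t ∈ Set.Icc (0 : ℝ) T, HasDerivAt h₀ (h₀' t) t)
    (ode2 : ∀ t ∈ Set.Icc (0 : ℝ) T, h₂' t + (1 - h₂ t) ^ 2 / lam - τ = 0)
    (ode1 : ∀ t ∈ Set.Icc (0 : ℝ) T,
      h₁' t + μ * h₂ t - (1 - h₂ t) * h₁ t / lam = 0)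
    (ode0 : ∀ t ∈ Set.Icc (0 : ℝ) T,
      h₀' t + σ ^ 2 / 2 * h₂ t + μ * h₁ t + h₁ t ^ 2 / (2 * lam) = 0)
    (hT2 : h₂ T = 0) (hT1 : h₁ T = 0) (hT0 : h₀ T = 0) :
    let V : ℝ → ℝ → ℝ := fun t z => (1 / 2) * h₂ t * z ^ 2 + h₁ t * z + h₀ t
    (∀ z : ℝ, V T z = 0) ∧
    ∀ t ∈ Set.Icc (0 : ℝ) T, ∀ z : ℝ,
      0 = deriv (fun s => V s z) t + σ ^ 2 / 2 * deriv (deriv (V t)) z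
            + μ * deriv (V t) z + (z - deriv (V t) z) ^ 2 / (2 * lam)
            - τ / 2 * z ^ 2 :=
  stmt14_general lam τ σ μ T h₂ h₁ h₀ h₂' h₁' h₀' hd2 hd1 hd0 ode2 ode1 ode0 hT2 hT1 hT0
end

section
/- Let λ > 0, ρ > 0 and τ, σ, μ ∈ ℝ, and let h₂, h₁, h₀ ∈ ℝ satisfy ρh₂ = (1 − h₂)²/λ − τ, ρh₁ = μh₂ − (1 − h₂)h₁/λ, and ρh₀ = (σ²/2)h₂ + μh₁ + h₁²/(2λ). Then V(z) := ½h₂z² + h₁z + h₀ satisfies, for every z ∈ ℝ, ρV(z) = (σ²/2)V″(z) + μV′(z) + (z − V′(z))²/(2λ) − (τ/2)z². -/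
/-! The quadratic ansatz turns the HJB equation into a polynomial identity in `z`; the three
algebraic equations are exactly the vanishing of its `z²`, `z` and constant coefficients. -/

theorem hasDerivAt_quadratic (a b c x : ℝ) :
    HasDerivAt (fun z => a * z ^ 2 + b * z + c) (2 * a * x + b) x := by
  simpa [mul_comm, mul_left_comm, mul_assoc] using
    (((hasDerivAt_pow 2 x).const_mul a).add ((hasDerivAt_id x).const_mul b)).add_const c

theorem deriv_quadratic (a b c : ℝ) :
    deriv (fun z => a * z ^ 2 + b * z + c) = fun x => 2 * a * x + b :=
  funext fun x => (hasDerivAt_quadratic a b c x).deriv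

theorem stmt17_general (lam ρ τ σ μ : ℝ)
    (h₂ h₁ h₀ : ℝ)
    (e2 : ρ * h₂ = (1 - h₂) ^ 2 / lam - τ)
    (e1 : ρ * h₁ = μ * h₂ - (1 - h₂) * h₁ / lam)
    (e0 : ρ * h₀ = σ ^ 2 / 2 * h₂ + μ * h₁ + h₁ ^ 2 / (2 * lam)) :
    let V : ℝ → ℝ := fun z => (1 / 2) * h₂ * z ^ 2 + h₁ * z + h₀
    ∀ z : ℝ,
      ρ * V z = σ ^ 2 / 2 * deriv (deriv V) z + μ * deriv V z
          + (z - deriv V z) ^ 2 / (2 * lam) - τ / 2 * z ^ 2 := by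
  intro V z
  have hV' : deriv V = fun x => h₂ * x + h₁ := by
    rw [deriv_quadratic]
    ring_nf
  have hV'' : deriv (deriv V) z = h₂ := by
    rw [hV']
    simp
  rw [hV'', hV']
  linear_combination (z ^ 2 / 2) * e2 + z * e1 + e0

/-- verification that the quadratic ansatz
`V(z) = ½h₂z² + h₁z + h₀` built from solutions of the algebraic system solves the
discounted-infinite-horizon HJB equation
`ρV = (σ²/2)V″ + μV′ + (z − V′)²/(2λ) − (τ/2)z²`. -/
theorem stmt17 (lam ρ τ σ μ : ℝ) (hlam : 0 < lam) (hρ : 0 < ρ)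
    (h₂ h₁ h₀ : ℝ)
    (e2 : ρ * h₂ = (1 - h₂) ^ 2 / lam - τ)
    (e1 : ρ * h₁ = μ * h₂ - (1 - h₂) * h₁ / lam)
    (e0 : ρ * h₀ = σ ^ 2 / 2 * h₂ + μ * h₁ + h₁ ^ 2 / (2 * lam)) :
    let V : ℝ → ℝ := fun z => (1 / 2) * h₂ * z ^ 2 + h₁ * z + h₀
    ∀ z : ℝ,
      ρ * V z = σ ^ 2 / 2 * deriv (deriv V) z + μ * deriv V z
          + (z - deriv V z) ^ 2 / (2 * lam) - τ / 2 * z ^ 2 :=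
  stmt17_general lam ρ τ σ μ h₂ h₁ h₀ e2 e1 e0
end

section
/- Let λ, τ > 0 and μ, σ ∈ ℝ. For ρ > 0 define h₂(ρ) = 1 + ρλ/2 − √(ρ²λ²/4 + ρλ + τλ), h₁(ρ) = −(μ/(ρ+τ))·((1 + ρλ)h₂(ρ) − (1 − τλ)), and h₀(ρ) = (1/ρ)·{ [σ²/2 + (ρμ²/(ρ+τ)²)·(1 + ρλ)²/2 ]·h₂(ρ) + (μ²/(ρ+τ)²)(1 − λτ)(τ/2 − ρ²λ/2) }. Then for every z ∈ ℝ, lim_{ρ→0⁺} ρ·(½h₂(ρ)z² + h₁(ρ)z + h₀(ρ)) = (σ²/2)(1 − √(λτ)) + (μ²/(2τ))(1 − λτ); in particular the limit is independent of z. -/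
/-! The factor `1 / ρ` in `h₀` cancels against `ρ`, so for `ρ ≠ 0` the quantity `ρ V_ρ(z)` agrees
with a function continuous at `0` (since `ρ + τ ≠ 0` there). Its value at `0`, where the
`z`-dependent terms vanish, is the ergodic constant. -/

open Filter Topology

theorem tendsto_mul_add_one_div_mul_of_continuousAt {𝕜 : Type*} [NormedField 𝕜]
    {f g : 𝕜 → 𝕜} {c : 𝕜} (hf : ContinuousAt f 0)
    (hg : ContinuousAt g 0) (hc : g 0 = c) :
    Tendsto (fun ρ => ρ * (f ρ + (1 / ρ) * g ρ)) (𝓝[≠] 0) (𝓝 c) := by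
  have hcont : ContinuousAt (fun ρ => ρ * f ρ + g ρ) 0 := by fun_prop
  have hlim : Tendsto (fun ρ => ρ * f ρ + g ρ) (𝓝[≠] 0) (𝓝 c) := by
    simpa [hc] using hcont.tendsto.mono_left nhdsWithin_le_nhds
  refine hlim.congr' ?_
  filter_upwards [self_mem_nhdsWithin] with ρ (hρ : ρ ≠ 0)
  field_simp

theorem stmt19_general (lam τ μ σ : ℝ) (hτ : 0 < τ) :
    let h₂ : ℝ → ℝ := fun ρ =>
      1 + ρ * lam / 2 - Real.sqrt (ρ ^ 2 * lam ^ 2 / 4 + ρ * lam + τ * lam)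
    let h₁ : ℝ → ℝ := fun ρ =>
      -(μ / (ρ + τ)) * ((1 + ρ * lam) * h₂ ρ - (1 - τ * lam))
    let h₀ : ℝ → ℝ := fun ρ =>
      (1 / ρ) * ((σ ^ 2 / 2 + ρ * μ ^ 2 / (ρ + τ) ^ 2 * (1 + ρ * lam) ^ 2 / 2) * h₂ ρ
        + μ ^ 2 / (ρ + τ) ^ 2 * (1 - lam * τ) * (τ / 2 - ρ ^ 2 * lam / 2))
    ∀ z : ℝ,
      Tendsto (fun ρ => ρ * ((1 / 2) * h₂ ρ * z ^ 2 + h₁ ρ * z + h₀ ρ))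
        (nhdsWithin 0 (Set.Ioi 0))
        (nhds (σ ^ 2 / 2 * (1 - Real.sqrt (lam * τ))
                + μ ^ 2 / (2 * τ) * (1 - lam * τ))) := by
  intro h₂ h₁ h₀ z
  have hh₂ : ContinuousAt h₂ 0 := by fun_prop
  have hh₂₀ : h₂ 0 = 1 - Real.sqrt (lam * τ) := by simp [h₂, mul_comm τ lam]
  have hh₁ : ContinuousAt h₁ 0 := by fun_prop (disch := simp [hτ.ne'])
  refine (tendsto_mul_add_one_div_mul_of_continuousAt (by fun_prop)
    (by fun_prop (disch := simp [hτ.ne'])) ?_).mono_left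
    (nhdsWithin_mono _ fun ρ (hρ : 0 < ρ) => hρ.ne')
  simp only [hh₂₀]
  field_simp
  ring

/-- the vanishing-discount limit of the discounted value function.
With the explicit coefficients `h₂(ρ), h₁(ρ), h₀(ρ)` of the discounted problem,
for every `z`, `ρ·(½h₂(ρ)z² + h₁(ρ)z + h₀(ρ)) → (σ²/2)(1 − √(λτ)) + (μ²/(2τ))(1 − λτ)`
as `ρ → 0⁺`; in particular the limit is independent of `z`. -/
theorem stmt19 (lam τ μ σ : ℝ) (hlam : 0 < lam) (hτ : 0 < τ) :
    let h₂ : ℝ → ℝ := fun ρ =>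
      1 + ρ * lam / 2 - Real.sqrt (ρ ^ 2 * lam ^ 2 / 4 + ρ * lam + τ * lam)
    let h₁ : ℝ → ℝ := fun ρ =>
      -(μ / (ρ + τ)) * ((1 + ρ * lam) * h₂ ρ - (1 - τ * lam))
    let h₀ : ℝ → ℝ := fun ρ =>
      (1 / ρ) * ((σ ^ 2 / 2 + ρ * μ ^ 2 / (ρ + τ) ^ 2 * (1 + ρ * lam) ^ 2 / 2) * h₂ ρ
        + μ ^ 2 / (ρ + τ) ^ 2 * (1 - lam * τ) * (τ / 2 - ρ ^ 2 * lam / 2))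
    ∀ z : ℝ,
      Tendsto (fun ρ => ρ * ((1 / 2) * h₂ ρ * z ^ 2 + h₁ ρ * z + h₀ ρ))
        (nhdsWithin 0 (Set.Ioi 0))
        (nhds (σ ^ 2 / 2 * (1 - Real.sqrt (lam * τ))
                + μ ^ 2 / (2 * τ) * (1 - lam * τ))) :=
  stmt19_general lam τ μ σ hτ
end
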